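/- Let x ∈ Lie(M) be locally finite. Suppose that for every object V of C the semisimple part s_V and the locally nilpotent part n_V of the additive Jordan–Chevalley decomposition of the locally finite endomorphism x_V already lie in End_{V^du}(V). Set s := (s_V)_{V an object of C} and n := (n_V)_{V an object of C}. Then s is a semisimple element of Lie(M), n is a locally nilpotent element of Lie(M), x = s + n and [s,n] = 0, and s and n are uniquely determined by these properties. -/

import Mathlib

open TensorProduct

universe u v w

attribute [local instance] LieRing.ofAssociativeRing

/-- The data of a (full sub)category `C` of `g`-modules together with a category of duals:
an index type `ι`, for each index a `g`-module `V i`, and a chosen point-separating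
subspace `du i` of the full linear dual of `V i`. -/
structure TannakaSetting (F : Type u) [Field F] (g : Type v) [LieRing g] [LieAlgebra F g] where
  ι : Type w
  V : ι → Type w
  [iAdd : ∀ i, AddCommGroup (V i)]
  [iMod : ∀ i, Module F (V i)]
  ρ : ∀ i, g →ₗ⁅F⁆ Module.End F (V i)
  du : ∀ i, Submodule F (Module.Dual F (V i))

attribute [instance] TannakaSetting.iAdd TannakaSetting.iMod

namespace TannakaSetting

variable {F : Type u} [Field F] {g : Type v} [LieRing g] [LieAlgebra F g]
variable (D : TannakaSetting F g)

/-- `g`-equivariant linear maps between objects of the category. -/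
def IsHom {i j : D.ι} (f : D.V i →ₗ[F] D.V j) : Prop :=
  ∀ x : g, f ∘ₗ (D.ρ i x : Module.End F (D.V i)) = (D.ρ j x : Module.End F (D.V j)) ∘ₗ f

/-- An endomorphism of `V i` lies in `End_{V^du}(V)`, i.e. its transpose preserves
the chosen dual subspace. -/
def PreservesDu (i : D.ι) (f : Module.End F (D.V i)) : Prop :=
  ∀ φ ∈ D.du i, f.dualMap φ ∈ D.du i

/-- The action of `x ∈ g` on a tensor product of two objects. -/
noncomputable def tensorρ (i j : D.ι) (x : g) : Module.End F (D.V i ⊗[F] D.V j) :=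
  TensorProduct.map (D.ρ i x) LinearMap.id + TensorProduct.map LinearMap.id (D.ρ j x)

/-- `e` realizes `V k` as a tensor product of the `g`-modules `V i` and `V j`. -/
def IsTensorProd (i j k : D.ι) (e : D.V k ≃ₗ[F] (D.V i ⊗[F] D.V j)) : Prop :=
  ∀ x : g, e.toLinearMap ∘ₗ (D.ρ k x : Module.End F (D.V k)) = D.tensorρ i j x ∘ₗ e.toLinearMap

/-- `e` realizes `V k` as a direct sum of the `g`-modules `V i` and `V j`. -/
def IsSumProd (i j k : D.ι) (e : D.V k ≃ₗ[F] (D.V i × D.V j)) : Prop :=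
  ∀ x : g, e.toLinearMap ∘ₗ (D.ρ k x : Module.End F (D.V k)) =
    ((D.ρ i x : Module.End F (D.V i)).prodMap (D.ρ j x : Module.End F (D.V j))) ∘ₗ e.toLinearMap

/-- `V i` is a one-dimensional trivial `g`-module. -/
def IsTrivOneDim (i : D.ι) : Prop :=
  Module.finrank F (D.V i) = 1 ∧ ∀ x : g, (D.ρ i x : Module.End F (D.V i)) = 0

/-- The functional `φ ⊗ ψ` on a tensor product. -/
noncomputable def tensorDual {i j : D.ι} (φ : Module.Dual F (D.V i))
    (ψ : Module.Dual F (D.V j)) : Module.Dual F (D.V i ⊗[F] D.V j) :=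
  TensorProduct.dualDistrib F (D.V i) (D.V j) (φ ⊗ₜ[F] ψ)

/-- The axioms on the pair of categories `C`, `C^du`:
`C` is closed under isomorphism, (binary) direct sums, tensor products, submodules,
contains a one-dimensional trivial module, `g` acts faithfully, and the duals separate points,
are stable under the transposed `g`-action and under transposes of morphisms, and are compatible
with direct sums and tensor products. -/
structure IsGoodSetting : Prop where
  separating : ∀ (i : D.ι) (v : D.V i), v ≠ 0 → ∃ φ ∈ D.du i, φ v ≠ 0
  du_g : ∀ (i : D.ι) (x : g), D.PreservesDu i (D.ρ i x)
  du_hom : ∀ (i j : D.ι) (f : D.V i →ₗ[F] D.V j), D.IsHom f →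
    ∀ ψ ∈ D.du j, f.dualMap ψ ∈ D.du i
  faithful : ∀ x : g, (∀ i, (D.ρ i x : Module.End F (D.V i)) = 0) → x = 0
  exists_triv : ∃ i, D.IsTrivOneDim i
  exists_sum : ∀ i j : D.ι, ∃ (k : D.ι) (e : D.V k ≃ₗ[F] (D.V i × D.V j)), D.IsSumProd i j k e
  exists_tensor : ∀ i j : D.ι,
    ∃ (k : D.ι) (e : D.V k ≃ₗ[F] (D.V i ⊗[F] D.V j)), D.IsTensorProd i j k e
  du_tensor : ∀ (i j k : D.ι) (e : D.V k ≃ₗ[F] (D.V i ⊗[F] D.V j)), D.IsTensorProd i j k e →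
    ∀ φ ∈ D.du i, ∀ ψ ∈ D.du j, e.toLinearMap.dualMap (D.tensorDual φ ψ) ∈ D.du k
  du_sum : ∀ (i j k : D.ι) (e : D.V k ≃ₗ[F] (D.V i × D.V j)), D.IsSumProd i j k e →
    ∀ ξ : Module.Dual F (D.V k), ξ ∈ D.du k ↔
      ∃ φ ∈ D.du i, ∃ ψ ∈ D.du j,
        ξ = e.toLinearMap.dualMap
          ((LinearMap.fst F (D.V i) (D.V j)).dualMap φ +
            (LinearMap.snd F (D.V i) (D.V j)).dualMap ψ)
  submod_closed : ∀ (i : D.ι) (U : Submodule F (D.V i)), (∀ x : g, ∀ u ∈ U, D.ρ i x u ∈ U) →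
    ∃ (k : D.ι) (e : D.V k ≃ₗ[F] ↥U), ∀ (x : g) (v : D.V k),
      (↑(e ((D.ρ k x) v)) : D.V i) = D.ρ i x ↑(e v)
  isoClosed : ∀ (W : Type w) [AddCommGroup W] [Module F W] (ρW : g →ₗ⁅F⁆ Module.End F W)
    (i : D.ι) (e : D.V i ≃ₗ[F] W), (∀ (x : g) (v : D.V i), e (D.ρ i x v) = ρW x (e v)) →
    ∃ (k : D.ι) (e' : D.V k ≃ₗ[F] W), ∀ (x : g) (v : D.V k), e' (D.ρ k x v) = ρW x (e' v)

/-- The algebra `Nat` of natural transformations: families of endomorphisms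
`m i ∈ End_{V^du}(V i)` commuting with all `g`-equivariant maps between objects. -/
def NatAlg : Set (∀ i, Module.End F (D.V i)) :=
  { m | (∀ i, D.PreservesDu i (m i)) ∧
        ∀ (i j : D.ι) (f : D.V i →ₗ[F] D.V j), D.IsHom f → f ∘ₗ m i = m j ∘ₗ f }

/-- The Tannaka monoid `M`: natural transformations compatible with tensor products and
acting as the identity on trivial one-dimensional modules. -/
def M : Set (∀ i, Module.End F (D.V i)) :=
  { m | m ∈ D.NatAlg ∧
        (∀ (i j k : D.ι) (e : D.V k ≃ₗ[F] (D.V i ⊗[F] D.V j)), D.IsTensorProd i j k e →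
          e.toLinearMap ∘ₗ m k = TensorProduct.map (m i) (m j) ∘ₗ e.toLinearMap) ∧
        (∀ i, D.IsTrivOneDim i → m i = 1) }

/-- The matrix coefficient `f_{φ v}` as a function on the Tannaka monoid `M`. -/
def matCoef (i : D.ι) (φ : Module.Dual F (D.V i)) (v : D.V i) : ↥D.M → F :=
  fun m => φ (m.1 i v)

/-- The coordinate ring `F[M]` of matrix coefficients (a set of functions on `M`). -/
def coordRing : Set (↥D.M → F) :=
  { f | ∃ (i : D.ι) (φ : Module.Dual F (D.V i)) (v : D.V i), φ ∈ D.du i ∧ f = D.matCoef i φ v }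

/-- The Lie algebra `Lie(M)` of the Tannaka monoid. -/
def LieM : Set (∀ i, Module.End F (D.V i)) :=
  { x | x ∈ D.NatAlg ∧
        (∀ (i j k : D.ι) (e : D.V k ≃ₗ[F] (D.V i ⊗[F] D.V j)), D.IsTensorProd i j k e →
          e.toLinearMap ∘ₗ x k =
            (TensorProduct.map (x i) LinearMap.id +
              TensorProduct.map LinearMap.id (x j)) ∘ₗ e.toLinearMap) ∧
        (∀ i, D.IsTrivOneDim i → x i = 0) ∧
        (∃ δ : (↥D.M → F) → F, ∀ (i : D.ι) (φ : Module.Dual F (D.V i)) (v : D.V i),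
          φ ∈ D.du i → δ (D.matCoef i φ v) = φ (x i v)) }

/-- The Lie algebra `Lie(N)` of a submonoid `N ⊆ M`: those `x ∈ Lie(M)` whose derivation
`δ_x` annihilates the vanishing ideal `I(N) ⊆ F[M]`. -/
def LieOf (N : Set (↥D.M)) : Set (∀ i, Module.End F (D.V i)) :=
  { x | x ∈ D.LieM ∧ ∀ (i : D.ι) (φ : Module.Dual F (D.V i)) (v : D.V i), φ ∈ D.du i →
      (∀ n ∈ N, D.matCoef i φ v n = 0) → φ (x i v) = 0 }

/-- The unit group `M^×` of the Tannaka monoid, as a subset of `M`. -/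
def unitsSet : Set (↥D.M) :=
  { m | ∃ n : ↥D.M, m.1 * n.1 = 1 ∧ n.1 * m.1 = 1 }

/-- The pair `C`, `C^du` is good for integrating `g`: `g ⊆ Lie(M)`. -/
def Good : Prop := ∀ x : g, (fun i => (D.ρ i x : Module.End F (D.V i))) ∈ D.LieM

/-- The pair `C`, `C^du` is very good for integrating `g`: `g ⊆ Lie(M^×)`. -/
def VeryGood : Prop :=
  ∀ x : g, (fun i => (D.ρ i x : Module.End F (D.V i))) ∈ D.LieOf D.unitsSet

/-- A subset `S ⊆ M` is Zariski dense in `M`. -/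
def DenseIn (S : Set (↥D.M)) : Prop :=
  ∀ f ∈ D.coordRing, (∀ m ∈ S, f m = 0) → ∀ m, f m = 0

theorem one_mem_M : (1 : ∀ i, Module.End F (D.V i)) ∈ D.M := by
  refine ⟨⟨?_, ?_⟩, ?_, ?_⟩
  · intro i φ hφ
    exact hφ
  · intro i j f _
    ext v
    simp
  · intro i j k e _
    ext v
    simp [TensorProduct.map_one]
  · intro i _
    rfl

/-- The unit of the Tannaka monoid as an element of the subtype `↥M`. -/
def oneM : ↥D.M := ⟨1, D.one_mem_M⟩

end TannakaSetting

open TensorProduct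

section LocallyFiniteEndomorphisms

variable (F : Type u) [Field F] {V : Type*} [AddCommGroup V] [Module F V]

/-- A locally finite endomorphism: every vector lies in a finite-dimensional
invariant subspace. -/
def IsLocallyFinite (f : Module.End F V) : Prop :=
  ∀ v : V, ∃ U : Submodule F V, v ∈ U ∧ FiniteDimensional F ↥U ∧ ∀ u ∈ U, f u ∈ U

/-- A locally nilpotent endomorphism: every vector is annihilated by some power. -/
def LocallyNilpotent (f : Module.End F V) : Prop :=
  ∀ v : V, ∃ n : ℕ, (f ^ n) v = 0

/-- An endomorphism is (absolutely) semisimple if its extension to the scalar extension by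
the algebraic closure of `F` is semisimple. -/
def IsAbsSemisimple (f : Module.End F V) : Prop :=
  Module.End.IsSemisimple (LinearMap.baseChange (AlgebraicClosure F) f)

/-- A locally weak unipotent endomorphism: `V = ker f ⊕ im f`, and the restriction of `f`
to its image is locally unipotent. -/
def LocallyWeakUnipotent (f : Module.End F V) : Prop :=
  IsCompl (LinearMap.ker f) (LinearMap.range f) ∧
  ∀ v ∈ LinearMap.range f, ∃ n : ℕ, ((f - 1) ^ n) v = 0

end LocallyFiniteEndomorphisms

/-!
Over the algebraic closure `K` of `F`, the semisimple part `s` of a locally finite `x` acts on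
every generalized eigenspace of `x` by the eigenvalue, and these generalized eigenspaces span
`K ⊗ V`. Everything needed about `s` is read off from this. It commutes with every linear map
intertwining two such `x`'s, which gives naturality, compatibility with tensor products and
uniqueness (the semisimplicity of `s ⊗ 1 + 1 ⊗ t` holds because its eigenvectors span). It also
preserves every `x`-invariant subspace; applied to the subspace of vectors `w` with
`f_{ξ w} = 0` on `M`, which `x` preserves because `δ_x` exists, this shows that `φ (s v)`
depends only on `f_{φ v}`, so `δ_s` exists. Finally `n = x - s` lies in `Lie(M)`, which is a
linear subspace.
-/

section Endomorphisms

open Module End TensorProduct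

variable {k : Type*} [Field k] {V : Type*} [AddCommGroup V] [Module k V]
  {W : Type*} [AddCommGroup W] [Module k W]

lemma IsLocallyFinite.of_span_eq_top {f : End k V} {S : Set V}
    (hS : Submodule.span k S = ⊤)
    (h : ∀ v ∈ S,
      ∃ U : Submodule k V, v ∈ U ∧ FiniteDimensional k U ∧ ∀ u ∈ U, f u ∈ U) :
    IsLocallyFinite k f := by
  intro v
  have hv : v ∈ Submodule.span k S := hS ▸ Submodule.mem_top
  induction hv using Submodule.span_induction with
  | mem v hv => exact h v hv
  | zero => exact ⟨⊥, zero_mem _, inferInstance, by simp⟩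
  | add a b _ _ ha hb =>
    obtain ⟨U, haU, _, hU⟩ := ha
    obtain ⟨U', hbU', _, hU'⟩ := hb
    refine ⟨U ⊔ U', Submodule.add_mem_sup haU hbU', inferInstance, fun u hu => ?_⟩
    obtain ⟨u₁, hu₁, u₂, hu₂, rfl⟩ := Submodule.mem_sup.mp hu
    rw [map_add]
    exact Submodule.add_mem_sup (hU u₁ hu₁) (hU' u₂ hu₂)
  | smul c a _ ha =>
    obtain ⟨U, haU, hUfin, hU⟩ := ha
    exact ⟨U, U.smul_mem c haU, hUfin, hU⟩

lemma locallyNilpotent_iff_maxGenEigenspace_zero_eq_top {f : End k V} :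
    LocallyNilpotent k f ↔ f.maxGenEigenspace 0 = ⊤ := by
  simp [LocallyNilpotent, Submodule.eq_top_iff', mem_maxGenEigenspace]

lemma LocallyNilpotent.of_span_eq_top {f : End k V} {S : Set V}
    (hS : Submodule.span k S = ⊤) (h : ∀ v ∈ S, ∃ r : ℕ, (f ^ r) v = 0) :
    LocallyNilpotent k f := by
  rw [locallyNilpotent_iff_maxGenEigenspace_zero_eq_top, eq_top_iff, ← hS, Submodule.span_le]
  intro v hv
  simpa [mem_maxGenEigenspace] using h v hv

lemma LocallyNilpotent.add {a b : End k V} (hab : Commute a b)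
    (ha : LocallyNilpotent k a) (hb : LocallyNilpotent k b) : LocallyNilpotent k (a + b) := by
  rw [locallyNilpotent_iff_maxGenEigenspace_zero_eq_top] at ha hb ⊢
  simpa [ha, hb] using genEigenspace_inf_le_add a b 0 0 ⊤ ⊤ hab

lemma LocallyNilpotent.isNilpotent_restrict {n : End k V} (hn : LocallyNilpotent k n)
    {U : Submodule k V} [FiniteDimensional k U] (hU : ∀ u ∈ U, n u ∈ U) :
    IsNilpotent (n.restrict hU) := by
  refine isNilpotent_iff_of_finite.mpr fun u => ?_
  obtain ⟨r, hr⟩ := hn u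
  exact ⟨r, by rw [pow_restrict, LinearMap.restrict_apply]; exact Subtype.ext hr⟩

lemma IsLocallyFinite.exists_invariant_of_commute {x n : End k V} (hx : IsLocallyFinite k x)
    (hn : LocallyNilpotent k n) (hc : Commute x n) (v : V) :
    ∃ U : Submodule k V, v ∈ U ∧ FiniteDimensional k U ∧
      (∀ u ∈ U, x u ∈ U) ∧ ∀ u ∈ U, n u ∈ U := by
  let G : ℕ × ℕ → V := fun p => (x ^ p.1) ((n ^ p.2) v)
  have hspan_le {f : End k V} (hf : ∀ p, f (G p) ∈ Set.range G) :
      ∀ u ∈ Submodule.span k (Set.range G), f u ∈ Submodule.span k (Set.range G) := by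
    intro u hu
    have : Submodule.span k (Set.range G) ≤ (Submodule.span k (Set.range G)).comap f :=
      Submodule.span_le.mpr (by rintro _ ⟨p, rfl⟩; exact Submodule.subset_span (hf p))
    exact this hu
  refine ⟨Submodule.span k (Set.range G), Submodule.subset_span ⟨(0, 0), by simp [G]⟩, ?_,
    hspan_le fun ⟨a, b⟩ => ⟨(a + 1, b), by simp [G, pow_succ']⟩,
    hspan_le fun ⟨a, b⟩ => ⟨(a, b + 1), ?_⟩⟩
  · obtain ⟨B, hB⟩ := hn v
    choose U hvU hUfin hU using fun b : Fin B => hx ((n ^ (b : ℕ)) v)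
    refine Submodule.finiteDimensional_of_le (S₂ := ⨆ b, U b) (Submodule.span_le.mpr ?_)
    rintro _ ⟨⟨a, b⟩, rfl⟩
    rcases lt_or_ge b B with hb | hb
    · exact Submodule.mem_iSup_of_mem ⟨b, hb⟩ (pow_apply_mem_of_forall_mem a (hU _) _ (hvU _))
    · simp [G, pow_map_zero_of_le hb hB]
  · simp only [G, pow_succ', mul_apply, ← mul_apply (x ^ a) n, (hc.pow_left a).eq]

lemma IsLocallyFinite.apply_eq_smul_of_mem_maxGenEigenspace {x s n : End k V}
    (hx : IsLocallyFinite k x) (hn : LocallyNilpotent k n) (hsum : x = s + n)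
    (hc : Commute s n) (hs : s.IsFinitelySemisimple) {μ : k} {m : V}
    (hm : m ∈ x.maxGenEigenspace μ) : s m = μ • m := by
  obtain ⟨U, hmU, _, hUx, hUn⟩ :=
    hx.exists_invariant_of_commute hn (hsum ▸ hc.add_left (Commute.refl n)) m
  have hUs : ∀ u ∈ U, s u ∈ U := fun u hu => by
    simpa [hsum] using U.sub_mem (hUx u hu) (hUn u hu)
  have hmU' : (⟨m, hmU⟩ : U) ∈ maxGenEigenspace (x.restrict hUx) μ := by
    rwa [maxGenEigenspace, genEigenspace_restrict]
  have hnil : IsNilpotent (x.restrict hUx - s.restrict hUs) := by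
    convert hn.isNilpotent_restrict hUn
    ext u
    simp [hsum, LinearMap.restrict_apply]
  simpa [Subtype.ext_iff, LinearMap.restrict_apply] using
    apply_eq_of_mem_of_comm_of_isFinitelySemisimple_of_isNil hmU'
      (LinearMap.restrict_commute (hsum ▸ (Commute.refl s).add_left hc.symm) hUx hUs)
      (hs.restrict hUs) hnil

lemma IsLocallyFinite.iSup_maxGenEigenspace_eq_top [IsAlgClosed k] {x : End k V}
    (hx : IsLocallyFinite k x) : ⨆ μ, x.maxGenEigenspace μ = ⊤ := by
  refine Submodule.eq_top_iff'.mpr fun v => ?_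
  obtain ⟨U, hvU, _, hU⟩ := hx v
  have hle : ⨆ μ, maxGenEigenspace (x.restrict hU) μ ≤
      (⨆ μ, x.maxGenEigenspace μ).comap U.subtype :=
    iSup_le fun μ => by
      rw [maxGenEigenspace, genEigenspace_restrict]
      exact Submodule.comap_mono (le_iSup (fun μ => x.maxGenEigenspace μ) μ)
  exact hle (Module.End.iSup_maxGenEigenspace_eq_top (x.restrict hU) ▸
    Submodule.mem_top (x := (⟨v, hvU⟩ : U)))

lemma commute_map_add_map {a c : End k V} {b d : End k W} (hac : Commute a c)
    (hbd : Commute b d) :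
    Commute (map a LinearMap.id + map LinearMap.id b)
      (map c LinearMap.id + map LinearMap.id d) := by
  refine TensorProduct.ext' fun v w => ?_
  simp only [mul_apply, LinearMap.add_apply, map_tmul, LinearMap.id_apply, map_add,
    ← mul_apply a c, ← mul_apply b d, hac.eq, hbd.eq]
  abel

lemma IsLocallyFinite.map_add_map {x : End k V} {y : End k W} (hx : IsLocallyFinite k x)
    (hy : IsLocallyFinite k y) :
    IsLocallyFinite k (map x LinearMap.id + map LinearMap.id y) := by
  refine .of_span_eq_top (span_tmul_eq_top k V W) ?_
  rintro _ ⟨v, w, rfl⟩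
  obtain ⟨U, hvU, _, hU⟩ := hx v
  obtain ⟨U', hwU', _, hU'⟩ := hy w
  have hinv : Submodule.map₂ (mk k V W) U U' ≤
      (Submodule.map₂ (mk k V W) U U').comap (map x LinearMap.id + map LinearMap.id y) :=
    Submodule.map₂_le.mpr fun a ha b hb => by
      simp only [Submodule.mem_comap, mk_apply, LinearMap.add_apply, map_tmul, LinearMap.id_apply]
      exact Submodule.add_mem _ (Submodule.apply_mem_map₂ _ (hU a ha) hb)
        (Submodule.apply_mem_map₂ _ ha (hU' b hb))
  exact ⟨_, Submodule.apply_mem_map₂ _ hvU hwU',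
    Module.Finite.iff_fg.mpr ((Module.Finite.iff_fg.mp inferInstance).map₂ _
      (Module.Finite.iff_fg.mp inferInstance)), fun z hz => hinv hz⟩

lemma LocallyNilpotent.map_add_map {n : End k V} {m : End k W} (hn : LocallyNilpotent k n)
    (hm : LocallyNilpotent k m) :
    LocallyNilpotent k (map n LinearMap.id + map LinearMap.id m) := by
  refine .add (TensorProduct.ext' fun v w => by simp)
    (.of_span_eq_top (span_tmul_eq_top k V W) ?_) (.of_span_eq_top (span_tmul_eq_top k V W) ?_)
  · rintro _ ⟨v, w, rfl⟩
    obtain ⟨r, hr⟩ := hn v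
    exact ⟨r, by simp [hr]⟩
  · rintro _ ⟨v, w, rfl⟩
    obtain ⟨r, hr⟩ := hm w
    exact ⟨r, by simp [hr]⟩

lemma iSup_eigenspace_map_add_map_eq_top {S : End k V} {T : End k W}
    (hS : ⨆ μ, S.eigenspace μ = ⊤) (hT : ⨆ μ, T.eigenspace μ = ⊤) :
    ⨆ μ, eigenspace (map S LinearMap.id + map LinearMap.id T) μ = ⊤ := by
  rw [eq_top_iff, ← map₂_mk_top_top_eq_top, ← hS, ← hT, Submodule.map₂_iSup_left]
  refine iSup_le fun μ => ?_
  rw [Submodule.map₂_iSup_right]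
  refine iSup_le fun ν =>
    le_trans (Submodule.map₂_le.mpr fun v hv w hw => ?_) (le_iSup _ (μ + ν))
  rw [mem_eigenspace_iff] at hv hw ⊢
  simp [hv, hw, smul_tmul', tmul_smul, add_smul]

open Polynomial in
lemma Module.End.isSemisimple_of_iSup_eigenspace_eq_top {f : End k V}
    (h : ⨆ μ, f.eigenspace μ = ⊤) : f.IsSemisimple := by
  let p : k → Submodule k[X] (AEval' f) := fun μ =>
    AEval.mapSubmodule k V f ⟨_, eigenspace_mem_invtSubmodule f μ⟩
  refine isSemisimpleModule_of_isSemisimpleModule_submodule' (p := p) (fun μ => ?_) ?_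
  · refine (AEval.restrict_equiv_mapSubmodule f _
      (eigenspace_mem_invtSubmodule f μ)).isSemisimpleModule_iff.mp ?_
    show IsSemisimple (f.restrict _)
    rw [restrict_eigenspace]
    exact IsSemisimple_smul μ isSemisimple_id
  · suffices ∀ v ∈ ⨆ μ, f.eigenspace μ, AEval'.of f v ∈ ⨆ μ, p μ from
      eq_top_iff.mpr fun z _ => by
        simpa only [LinearEquiv.apply_symm_apply] using
          this ((AEval'.of f).symm z) (h ▸ Submodule.mem_top)
    intro v hv
    induction hv using Submodule.iSup_induction' with
    | mem μ v hv => exact Submodule.mem_iSup_of_mem μ (by simpa [p] using hv)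
    | zero => simp
    | add a b _ _ ha hb => simpa using Submodule.add_mem _ ha hb

lemma Module.End.apply_mem_maxGenEigenspace_of_comp_eq {R : Type*} [CommRing R]
    {M N : Type*} [AddCommGroup M] [Module R M] [AddCommGroup N] [Module R N]
    {a : End R M} {b : End R N} {f : M →ₗ[R] N} (h : f ∘ₗ a = b ∘ₗ f) {μ : R} {m : M}
    (hm : m ∈ a.maxGenEigenspace μ) : f m ∈ b.maxGenEigenspace μ := by
  rw [mem_maxGenEigenspace] at hm ⊢
  obtain ⟨r, hr⟩ := hm
  have hμ : (b - μ • 1) ∘ₗ f = f ∘ₗ (a - μ • 1) := by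
    rw [LinearMap.sub_comp, LinearMap.comp_sub, h]
    ext
    simp
  refine ⟨r, ?_⟩
  rw [← LinearMap.comp_apply, commute_pow_left_of_commute hμ, LinearMap.comp_apply, hr,
    map_zero]

lemma Module.End.apply_mem_of_forall_maxGenEigenspace {k : Type*} [Field k] [IsAlgClosed k]
    {V : Type*} [AddCommGroup V] [Module k V] {x s : End k V}
    (hs : ∀ μ, ∀ m ∈ x.maxGenEigenspace μ, s m = μ • m) {U : Submodule k V}
    [FiniteDimensional k U] (hU : ∀ u ∈ U, x u ∈ U) {u : V} (hu : u ∈ U) : s u ∈ U := by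
  have hle : ⨆ μ, maxGenEigenspace (x.restrict hU) μ ≤ (U.comap s).comap U.subtype :=
    iSup_le fun μ w hw => by
      rw [maxGenEigenspace, genEigenspace_restrict] at hw
      simpa [hs μ w hw] using U.smul_mem μ w.2
  exact hle (iSup_maxGenEigenspace_eq_top (x.restrict hU) ▸
    Submodule.mem_top (x := (⟨u, hu⟩ : U)))

end Endomorphisms

section BaseChange

open Module End TensorProduct

variable {F : Type*} [Field F] (K : Type*) [Field K] [Algebra F K]
  {V : Type*} [AddCommGroup V] [Module F V] {W : Type*} [AddCommGroup W] [Module F W]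

lemma Submodule.baseChange_mapsTo {U : Submodule F V} {f : End F V} (hU : ∀ u ∈ U, f u ∈ U) :
    ∀ z ∈ U.baseChange K, f.baseChange K z ∈ U.baseChange K := by
  rintro _ ⟨t, rfl⟩
  exact ⟨(f.restrict hU).baseChange K t, by
    rw [← LinearMap.comp_apply, ← LinearMap.baseChange_comp, ← LinearMap.comp_apply,
      ← LinearMap.baseChange_comp]; rfl⟩

lemma IsLocallyFinite.baseChange {f : End F V} (hf : IsLocallyFinite F f) :
    IsLocallyFinite K (f.baseChange K) := by
  refine .of_span_eq_top (Submodule.span_eq_top_of_span_eq_top F _ _ (span_tmul_eq_top F K V)) ?_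
  rintro _ ⟨c, v, rfl⟩
  obtain ⟨U, hvU, _, hU⟩ := hf v
  exact ⟨U.baseChange K, Submodule.tmul_mem_baseChange_of_mem c hvU,
    LinearMap.finiteDimensional_range _, Submodule.baseChange_mapsTo K hU⟩

lemma LocallyNilpotent.baseChange {f : End F V} (hf : LocallyNilpotent F f) :
    LocallyNilpotent K (f.baseChange K) := by
  refine .of_span_eq_top (Submodule.span_eq_top_of_span_eq_top F _ _ (span_tmul_eq_top F K V)) ?_
  rintro _ ⟨c, v, rfl⟩
  obtain ⟨r, hr⟩ := hf v
  exact ⟨r, by rw [← LinearMap.baseChange_pow, LinearMap.baseChange_tmul, hr,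
    TensorProduct.tmul_zero]⟩

lemma Submodule.mem_of_one_tmul_mem_baseChange {U : Submodule F V} {v : V}
    (h : (1 : K) ⊗ₜ[F] v ∈ U.baseChange K) : v ∈ U := by
  rw [← Submodule.span_singleton_le_iff_mem] at h ⊢
  rwa [← Submodule.baseChange_le_iff (A := K), Submodule.baseChange_span, Set.image_singleton]

lemma distribBaseChange_comp_baseChange_map (f : End F V) (g : End F W) :
    (AlgebraTensorModule.distribBaseChange F K V W).toLinearMap ∘ₗ (map f g).baseChange K =
      map (f.baseChange K) (g.baseChange K) ∘ₗ
        (AlgebraTensorModule.distribBaseChange F K V W).toLinearMap := by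
  ext
  simp

lemma isAbsSemisimple_map_add_map {s : End F V} {t : End F W}
    (hs : ⨆ μ, eigenspace (s.baseChange (AlgebraicClosure F)) μ = ⊤)
    (ht : ⨆ μ, eigenspace (t.baseChange (AlgebraicClosure F)) μ = ⊤) :
    IsAbsSemisimple F (map s LinearMap.id + map LinearMap.id t) := by
  refine (LinearEquiv.isSemisimple_iff _ _
    (AlgebraTensorModule.distribBaseChange F (AlgebraicClosure F) V W) ?_).mpr
    (isSemisimple_of_iSup_eigenspace_eq_top (iSup_eigenspace_map_add_map_eq_top hs ht))
  simp only [LinearMap.baseChange_add, LinearMap.comp_add, LinearMap.add_comp,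
    distribBaseChange_comp_baseChange_map, LinearMap.baseChange_id]

end BaseChange

section JordanChevalley

open Module End TensorProduct

variable {F : Type*} [Field F] {V : Type*} [AddCommGroup V] [Module F V]
  {W : Type*} [AddCommGroup W] [Module F W]

structure IsJordanChevalleyDecomp (x s n : End F V) : Prop where
  eq_add : x = s + n
  commute : Commute s n
  isAbsSemisimple : IsAbsSemisimple F s
  locallyNilpotent : LocallyNilpotent F n

namespace IsJordanChevalleyDecomp

variable {x s n : End F V}

lemma baseChange_apply_eq_smul (h : IsJordanChevalleyDecomp x s n) (hx : IsLocallyFinite F x)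
    {μ : AlgebraicClosure F} {m : AlgebraicClosure F ⊗[F] V}
    (hm : m ∈ maxGenEigenspace (x.baseChange (AlgebraicClosure F)) μ) :
    s.baseChange (AlgebraicClosure F) m = μ • m := by
  have hc : Commute (s.baseChange (AlgebraicClosure F)) (n.baseChange (AlgebraicClosure F)) :=
    h.commute.map (baseChangeHom F (AlgebraicClosure F) V)
  exact (hx.baseChange _).apply_eq_smul_of_mem_maxGenEigenspace (h.locallyNilpotent.baseChange _)
    (by rw [h.eq_add, LinearMap.baseChange_add]) hc h.isAbsSemisimple.isFinitelySemisimple hm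

lemma comp_eq_comp {y t m : End F W} (h : IsJordanChevalleyDecomp x s n)
    (h' : IsJordanChevalleyDecomp y t m) (hx : IsLocallyFinite F x) (hy : IsLocallyFinite F y)
    {f : V →ₗ[F] W} (hf : f ∘ₗ x = y ∘ₗ f) : f ∘ₗ s = t ∘ₗ f := by
  refine LinearMap.baseChangeHom_injective (R := F) (S := AlgebraicClosure F) (M := V) (N := W) ?_
  rw [LinearMap.baseChangeHom_apply, LinearMap.baseChangeHom_apply, LinearMap.baseChange_comp,
    LinearMap.baseChange_comp]
  refine LinearMap.ext_on (s := ⋃ μ, maxGenEigenspace (x.baseChange (AlgebraicClosure F)) μ)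
    (by rw [← Submodule.iSup_eq_span, (hx.baseChange _).iSup_maxGenEigenspace_eq_top]) ?_
  intro m hm
  obtain ⟨μ, hm⟩ := Set.mem_iUnion.mp hm
  have hfm : f.baseChange _ m ∈ maxGenEigenspace (y.baseChange (AlgebraicClosure F)) μ := by
    refine Module.End.apply_mem_maxGenEigenspace_of_comp_eq ?_ hm
    rw [← LinearMap.baseChange_comp, ← LinearMap.baseChange_comp, hf]
  simp only [LinearMap.comp_apply]
  rw [h.baseChange_apply_eq_smul hx hm, map_smul, h'.baseChange_apply_eq_smul hy hfm]

lemma unique {s' n' : End F V} (h : IsJordanChevalleyDecomp x s n)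
    (h' : IsJordanChevalleyDecomp x s' n') (hx : IsLocallyFinite F x) : s = s' := by
  simpa using h.comp_eq_comp h' hx hx (f := LinearMap.id) rfl

lemma zero : IsJordanChevalleyDecomp (0 : End F V) 0 0 where
  eq_add := by simp
  commute := Commute.zero_left 0
  isAbsSemisimple := by simp [IsAbsSemisimple]
  locallyNilpotent := fun v => ⟨1, by simp⟩

lemma apply_mem (h : IsJordanChevalleyDecomp x s n) (hx : IsLocallyFinite F x)
    {U : Submodule F V} (hU : ∀ u ∈ U, x u ∈ U) {v : V} (hv : v ∈ U) : s v ∈ U := by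
  obtain ⟨U', hvU', _, hU'⟩ := hx v
  have hU₀ : ∀ u ∈ U ⊓ U', x u ∈ U ⊓ U' := fun u hu => ⟨hU u hu.1, hU' u hu.2⟩
  have : FiniteDimensional (AlgebraicClosure F) ((U ⊓ U').baseChange (AlgebraicClosure F)) :=
    LinearMap.finiteDimensional_range _
  have hsv := apply_mem_of_forall_maxGenEigenspace (fun _ _ => h.baseChange_apply_eq_smul hx)
    (Submodule.baseChange_mapsTo _ hU₀) (Submodule.tmul_mem_baseChange_of_mem 1 ⟨hv, hvU'⟩)
  rw [LinearMap.baseChange_tmul] at hsv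
  exact (Submodule.mem_of_one_tmul_mem_baseChange _ hsv).1

lemma iSup_eigenspace_baseChange_eq_top (h : IsJordanChevalleyDecomp x s n)
    (hx : IsLocallyFinite F x) :
    ⨆ μ, eigenspace (s.baseChange (AlgebraicClosure F)) μ = ⊤ :=
  eq_top_iff.mpr <| (hx.baseChange _).iSup_maxGenEigenspace_eq_top.ge.trans <|
    iSup_mono fun _ _ hm => mem_eigenspace_iff.mpr (h.baseChange_apply_eq_smul hx hm)

lemma map_add_map {y t m : End F W} (h : IsJordanChevalleyDecomp x s n)
    (h' : IsJordanChevalleyDecomp y t m) (hx : IsLocallyFinite F x) (hy : IsLocallyFinite F y) :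
    IsJordanChevalleyDecomp (map x LinearMap.id + map LinearMap.id y)
      (map s LinearMap.id + map LinearMap.id t) (map n LinearMap.id + map LinearMap.id m) where
  eq_add := by
    rw [h.eq_add, h'.eq_add, map_add_left, map_add_right]
    abel
  commute := commute_map_add_map h.commute h'.commute
  isAbsSemisimple := isAbsSemisimple_map_add_map (h.iSup_eigenspace_baseChange_eq_top hx)
    (h'.iSup_eigenspace_baseChange_eq_top hy)
  locallyNilpotent := h.locallyNilpotent.map_add_map h'.locallyNilpotent

end IsJordanChevalleyDecomp

end JordanChevalley

namespace TannakaSetting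

open Module TensorProduct

variable {F : Type u} [Field F] {g : Type v} [LieRing g] [LieAlgebra F g]
  (D : TannakaSetting.{u, v, w} F g)

lemma mul_mem_M {m m' : ∀ i, End F (D.V i)} (hm : m ∈ D.M) (hm' : m' ∈ D.M) :
    m * m' ∈ D.M := by
  refine ⟨⟨fun i φ hφ => hm'.1.1 i _ (hm.1.1 i φ hφ), fun i j f hf => ?_⟩,
    fun i j k e he => ?_, fun i hi => by simp [Pi.mul_apply, hm.2.2 i hi, hm'.2.2 i hi]⟩
  · simp only [Pi.mul_apply, End.mul_eq_comp, ← LinearMap.comp_assoc, hm.1.2 i j f hf]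
    simp only [LinearMap.comp_assoc, hm'.1.2 i j f hf]
  · simp only [Pi.mul_apply, End.mul_eq_comp, ← LinearMap.comp_assoc, hm.2.1 i j k e he]
    rw [LinearMap.comp_assoc, hm'.2.1 i j k e he, ← LinearMap.comp_assoc,
      ← TensorProduct.map_comp]

def IsNatural (z : ∀ i, End F (D.V i)) : Prop :=
  ∀ (i j : D.ι) (f : D.V i →ₗ[F] D.V j), D.IsHom f → f ∘ₗ z i = z j ∘ₗ f

def coefKer (k : D.ι) (ξ : Module.Dual F (D.V k)) : Submodule F (D.V k) :=
  ⨅ m : D.M, LinearMap.ker (ξ ∘ₗ m.1 k)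

lemma mem_coefKer {k : D.ι} {ξ : Module.Dual F (D.V k)} {w : D.V k} :
    w ∈ D.coefKer k ξ ↔ D.matCoef k ξ w = 0 := by
  simp [coefKer, funext_iff, matCoef]

lemma apply_mem_coefKer_of_mem_LieM {x : ∀ i, End F (D.V i)} (hx : x ∈ D.LieM) {k : D.ι}
    {ξ : Module.Dual F (D.V k)} (hξ : ξ ∈ D.du k) {w : D.V k} (hw : w ∈ D.coefKer k ξ) :
    x k w ∈ D.coefKer k ξ := by
  obtain ⟨δ, hδ⟩ := hx.2.2.2
  simp only [coefKer, Submodule.mem_iInf, LinearMap.mem_ker, LinearMap.comp_apply] at hw ⊢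
  intro m
  -- `M` is closed under products, so `f_{ξ ∘ m, w}` vanishes and `δ_x` sees it as `f_{0, w}`.
  have hcoef : D.matCoef k ((m.1 k).dualMap ξ) w = D.matCoef k 0 w := funext fun m' =>
    hw ⟨m.1 * m'.1, D.mul_mem_M m.2 m'.2⟩
  simpa [hδ k _ w (m.2.1.1 k ξ hξ), hδ k 0 w (zero_mem _)] using congrArg δ hcoef

lemma sub_mem_LieM {x y : ∀ i, End F (D.V i)} (hx : x ∈ D.LieM) (hy : y ∈ D.LieM) :
    x - y ∈ D.LieM := by
  obtain ⟨δx, hδx⟩ := hx.2.2.2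
  obtain ⟨δy, hδy⟩ := hy.2.2.2
  refine ⟨⟨fun i φ hφ => ?_, fun i j f hf => ?_⟩, fun i j k e he => ?_,
    fun i hi => by simp [hx.2.2.1 i hi, hy.2.2.1 i hi], δx - δy,
    fun i φ v hφ => by simp [hδx i φ v hφ, hδy i φ v hφ]⟩
  · have : (x i - y i).dualMap φ = (x i).dualMap φ - (y i).dualMap φ := by
      simp [LinearMap.dualMap_apply', LinearMap.comp_sub]
    exact this ▸ sub_mem (hx.1.1 i φ hφ) (hy.1.1 i φ hφ)
  · simp [LinearMap.comp_sub, LinearMap.sub_comp, hx.1.2 i j f hf, hy.1.2 i j f hf]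
  · have hmap : map (x i - y i) LinearMap.id + map LinearMap.id (x j - y j) =
        (map (x i) LinearMap.id + map LinearMap.id (x j)) -
          (map (y i) LinearMap.id + map LinearMap.id (y j)) :=
      TensorProduct.ext' fun v w => by
        simp only [LinearMap.add_apply, LinearMap.sub_apply, map_tmul, LinearMap.id_apply,
          sub_tmul, tmul_sub]
        abel
    simp [hmap, LinearMap.comp_sub, LinearMap.sub_comp, hx.2.1 i j k e he, hy.2.1 i j k e he]

variable {D} in
lemma IsSumProd.apply_natural_symm_apply {i j k : D.ι} {e : D.V k ≃ₗ[F] (D.V i × D.V j)}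
    (he : D.IsSumProd i j k e) {z : ∀ i, End F (D.V i)} (hz : D.IsNatural z)
    (v : D.V i) (w : D.V j) : e (z k (e.symm (v, w))) = (z i v, z j w) := by
  have hfst : D.IsHom (LinearMap.fst F _ _ ∘ₗ e.toLinearMap) := fun y => by
    rw [LinearMap.comp_assoc, he y]
    rfl
  have hsnd : D.IsHom (LinearMap.snd F _ _ ∘ₗ e.toLinearMap) := fun y => by
    rw [LinearMap.comp_assoc, he y]
    rfl
  have h1 := LinearMap.congr_fun (hz k i _ hfst) (e.symm (v, w))
  have h2 := LinearMap.congr_fun (hz k j _ hsnd) (e.symm (v, w))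
  simp only [LinearMap.comp_apply, LinearEquiv.coe_coe, LinearEquiv.apply_symm_apply,
    LinearMap.fst_apply, LinearMap.snd_apply] at h1 h2
  exact Prod.ext h1 h2

lemma exists_derivation (HG : D.IsGoodSetting) {y : ∀ i, End F (D.V i)} (hnat : D.IsNatural y)
    (hy : ∀ (k : D.ι) (ξ : Module.Dual F (D.V k)) (w : D.V k), ξ ∈ D.du k →
      D.matCoef k ξ w = 0 → ξ (y k w) = 0) :
    ∃ δ : (↥D.M → F) → F, ∀ (i : D.ι) (φ : Module.Dual F (D.V i)) (v : D.V i),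
      φ ∈ D.du i → δ (D.matCoef i φ v) = φ (y i v) := by
  let c : (Σ i, D.du i × D.V i) → ↥D.M → F := fun p => D.matCoef p.1 p.2.1 p.2.2
  suffices Function.FactorsThrough (fun p : Σ i, D.du i × D.V i => p.2.1.1 (y p.1 p.2.2)) c from
    ⟨Function.extend c _ 0, fun i φ v hφ => this.extend_apply 0 ⟨i, ⟨φ, hφ⟩, v⟩⟩
  rintro ⟨i, ⟨φ, hφ⟩, v⟩ ⟨j, ⟨ψ, hψ⟩, w⟩ hc
  -- On `V_k ≅ V_i × V_j`, the functional `ξ = φ ∘ pr₁ - ψ ∘ pr₂` has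
  -- `f_{ξ (v, w)} = f_{φ v} - f_{ψ w} = 0`.
  obtain ⟨k, e, he⟩ := HG.exists_sum i j
  let ξ : Module.Dual F (D.V k) := e.toLinearMap.dualMap
    ((LinearMap.fst F _ _).dualMap φ + (LinearMap.snd F _ _).dualMap (-ψ))
  have hξ : ξ ∈ D.du k := (HG.du_sum i j k e he ξ).mpr ⟨φ, hφ, -ψ, neg_mem hψ, rfl⟩
  have hξz {z : ∀ i, End F (D.V i)} (hz : D.IsNatural z) :
      ξ (z k (e.symm (v, w))) = φ (z i v) - ψ (z j w) := by
    simp [ξ, he.apply_natural_symm_apply hz, sub_eq_add_neg]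
  have := hy k ξ _ hξ (funext fun m => by
    simp only [matCoef, Pi.zero_apply]
    rw [hξz m.2.1.2, sub_eq_zero]
    exact congrFun hc m)
  rwa [hξz hnat, sub_eq_zero] at this

lemma mem_LieM_of_isJordanChevalleyDecomp (HG : D.IsGoodSetting)
    {x s n : ∀ i, End F (D.V i)} (hx : x ∈ D.LieM) (hlf : ∀ i, IsLocallyFinite F (x i))
    (hJ : ∀ i, IsJordanChevalleyDecomp (x i) (s i) (n i))
    (hsdu : ∀ i, D.PreservesDu i (s i)) : s ∈ D.LieM := by
  have hnat : D.IsNatural s := fun i j f hf =>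
    (hJ i).comp_eq_comp (hJ j) (hlf i) (hlf j) (hx.1.2 i j f hf)
  refine ⟨⟨hsdu, hnat⟩, fun i j k e he => ?_, fun i hi => ?_,
    D.exists_derivation HG hnat fun k ξ w hξ hw => ?_⟩
  · exact (hJ k).comp_eq_comp ((hJ i).map_add_map (hJ j) (hlf i) (hlf j)) (hlf k)
      ((hlf i).map_add_map (hlf j)) (hx.2.1 i j k e he)
  · have h0 : IsJordanChevalleyDecomp (x i) 0 0 := by
      rw [hx.2.2.1 i hi]
      exact .zero
    exact (hJ i).unique h0 (hlf i)
  · have := (hJ k).apply_mem (hlf k) (fun u hu => D.apply_mem_coefKer_of_mem_LieM hx hξ hu)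
      (D.mem_coefKer.mpr hw)
    simpa [matCoef, oneM] using congrFun (D.mem_coefKer.mp this) D.oneM

end TannakaSetting

variable {F : Type u} [Field F] [CharZero F] {g : Type v} [LieRing g] [LieAlgebra F g]

theorem stmt_10_general (D : TannakaSetting F g) (HG : D.IsGoodSetting)
    (x : ∀ i, Module.End F (D.V i)) (hx : x ∈ D.LieM)
    (hlf : ∀ i, IsLocallyFinite F (x i))
    (s n : ∀ i, Module.End F (D.V i))
    (hsum : ∀ i, x i = s i + n i)
    (hcomm : ∀ i, s i * n i = n i * s i)
    (hss : ∀ i, IsAbsSemisimple F (s i))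
    (hnil : ∀ i, LocallyNilpotent F (n i))
    (hsdu : ∀ i, D.PreservesDu i (s i)) :
    s ∈ D.LieM ∧ n ∈ D.LieM ∧ x = s + n ∧ s * n = n * s ∧
    (∀ s' n' : ∀ i, Module.End F (D.V i), s' ∈ D.LieM → n' ∈ D.LieM →
      (∀ i, IsAbsSemisimple F (s' i)) → (∀ i, LocallyNilpotent F (n' i)) →
      x = s' + n' → s' * n' = n' * s' → s' = s ∧ n' = n) := by
  have hJ : ∀ i, IsJordanChevalleyDecomp (x i) (s i) (n i) :=
    fun i => ⟨hsum i, hcomm i, hss i, hnil i⟩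
  have hsLie := D.mem_LieM_of_isJordanChevalleyDecomp HG hx hlf hJ hsdu
  have hn : n = x - s := funext fun i => by simp [hsum i]
  refine ⟨hsLie, hn ▸ D.sub_mem_LieM hx hsLie, funext hsum, funext hcomm,
    fun s' n' _ _ hss' hnil' hsum' hcomm' => ?_⟩
  have hs' : s' = s := funext fun i =>
    ((hJ i).unique ⟨congrFun hsum' i, congrFun hcomm' i, hss' i, hnil' i⟩ (hlf i)).symm
  exact ⟨hs', by rw [hn, hsum', hs', add_sub_cancel_left]⟩

/-- **The additive Jordan–Chevalley decomposition in `Lie(M)`.**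
Let `x ∈ Lie(M)` be locally finite, and suppose that for every object `V` of `C` the semisimple
part `s_V` and the locally nilpotent part `n_V` of the additive Jordan–Chevalley decomposition
of `x_V` lie in `End_{V^du}(V)`.  Then `s = (s_V)_V` is a semisimple element of `Lie(M)`,
`n = (n_V)_V` is a locally nilpotent element of `Lie(M)`, `x = s + n`, `[s, n] = 0`, and `s`
and `n` are uniquely determined by these properties. -/
theorem stmt_10 (D : TannakaSetting F g) (HG : D.IsGoodSetting)
    (x : ∀ i, Module.End F (D.V i)) (hx : x ∈ D.LieM)
    (hlf : ∀ i, IsLocallyFinite F (x i))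
    (s n : ∀ i, Module.End F (D.V i))
    (hsum : ∀ i, x i = s i + n i)
    (hcomm : ∀ i, s i * n i = n i * s i)
    (hss : ∀ i, IsAbsSemisimple F (s i))
    (hnil : ∀ i, LocallyNilpotent F (n i))
    (hsdu : ∀ i, D.PreservesDu i (s i))
    (hndu : ∀ i, D.PreservesDu i (n i)) :
    s ∈ D.LieM ∧ n ∈ D.LieM ∧ x = s + n ∧ s * n = n * s ∧
    (∀ s' n' : ∀ i, Module.End F (D.V i), s' ∈ D.LieM → n' ∈ D.LieM →
      (∀ i, IsAbsSemisimple F (s' i)) → (∀ i, LocallyNilpotent F (n' i)) →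
      x = s' + n' → s' * n' = n' * s' → s' = s ∧ n' = n) :=
  stmt_10_general D HG x hx hlf s n hsum hcomm hss hnil hsdu
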